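/- Let u : ℝ² → ℝ be a smooth solution of the KdV equation u_t − 6u·u_x + u_xxx = 0. For λ ∈ ℝ define the 2×2 real matrix valued functions U_L = [[0, 1],[u − λ, 0]] and V_A = [[−u_x, 2u + 4λ],[2u² − u_xx + 2uλ − 4λ², u_x]]. Then the zero curvature equation ∂U_L/∂t − ∂V_A/∂x + U_L·V_A − V_A·U_L = 0 holds at every point (x,t) for every λ ∈ ℝ. -/

import Mathlib

/-- Entrywise partial derivative with respect to the first variable `x`. -/
noncomputable def matPDx (F : ℝ → ℝ → Matrix (Fin 2) (Fin 2) ℝ)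
    (x t : ℝ) : Matrix (Fin 2) (Fin 2) ℝ :=
  Matrix.of fun i j => deriv (fun x' => F x' t i j) x

/-- Entrywise partial derivative with respect to the second variable `t`. -/
noncomputable def matPDt (F : ℝ → ℝ → Matrix (Fin 2) (Fin 2) ℝ)
    (x t : ℝ) : Matrix (Fin 2) (Fin 2) ℝ :=
  Matrix.of fun i j => deriv (fun t' => F x t' i j) t

/-- The matrix `U_L = [[0, 1],[u - λ, 0]]` of the KdV zero curvature pair. -/
noncomputable def kdvUL (u : ℝ → ℝ → ℝ) (lam : ℝ) (x t : ℝ) :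
    Matrix (Fin 2) (Fin 2) ℝ :=
  !![0, 1; u x t - lam, 0]

/-- The matrix `V_A = [[-u_x, 2u + 4λ],[2u² - u_xx + 2uλ - 4λ², u_x]]` of the KdV
zero curvature pair. -/
noncomputable def kdvVA (u : ℝ → ℝ → ℝ) (lam : ℝ) (x t : ℝ) :
    Matrix (Fin 2) (Fin 2) ℝ :=
  !![-(deriv (fun x' => u x' t) x), 2 * u x t + 4 * lam;
     2 * (u x t) ^ 2 - iteratedDeriv 2 (fun x' => u x' t) x + 2 * u x t * lam
       - 4 * lam ^ 2,
     deriv (fun x' => u x' t) x]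

/-- If `u` is a smooth solution of the KdV equation `u_t - 6u·u_x + u_xxx = 0`,
then the matrices `U_L, V_A` satisfy the zero curvature equation
`∂t U_L - ∂x V_A + U_L·V_A - V_A·U_L = 0` for every real `λ` at every point. -/
theorem kdv_zero_curvature (u : ℝ → ℝ → ℝ)
    (hu : ContDiff ℝ (⊤ : ℕ∞) (fun p : ℝ × ℝ => u p.1 p.2))
    (hkdv : ∀ x t : ℝ,
      deriv (fun t' => u x t') t - 6 * u x t * deriv (fun x' => u x' t) x
        + iteratedDeriv 3 (fun x' => u x' t) x = 0) :
    ∀ (lam : ℝ) (x t : ℝ),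
      matPDt (kdvUL u lam) x t - matPDx (kdvVA u lam) x t
        + kdvUL u lam x t * kdvVA u lam x t
        - kdvVA u lam x t * kdvUL u lam x t = 0 := by
  intro lam x t
  have hgx : ContDiff ℝ (⊤ : ℕ∞) (fun x' => u x' t) := hu.comp (contDiff_id.prodMk contDiff_const)
  have hgx' : ContDiff ℝ ((⊤ : ℕ∞) : WithTop ℕ∞) (fun x' => u x' t) := hgx.of_le (by simp)
  have hg1 : Differentiable ℝ (fun x' => u x' t) := hgx'.differentiable (by norm_num)
  have hgd : ContDiff ℝ ((⊤ : ℕ∞) : WithTop ℕ∞) (deriv (fun x' => u x' t)) :=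
    (contDiff_infty_iff_deriv.mp hgx').2
  have hg2 : Differentiable ℝ (deriv (fun x' => u x' t)) := hgd.differentiable (by norm_num)
  have hgdd : ContDiff ℝ ((⊤ : ℕ∞) : WithTop ℕ∞) (deriv (deriv (fun x' => u x' t))) :=
    (contDiff_infty_iff_deriv.mp hgd).2
  have hg3 : Differentiable ℝ (deriv (deriv (fun x' => u x' t))) := hgdd.differentiable (by norm_num)
  have e2 : iteratedDeriv 2 (fun x' => u x' t) = deriv (deriv (fun x' => u x' t)) := by
    simp [iteratedDeriv_succ, iteratedDeriv_zero]
  have e3 : iteratedDeriv 3 (fun x' => u x' t) = deriv (deriv (deriv (fun x' => u x' t))) := by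
    simp [iteratedDeriv_succ, iteratedDeriv_zero]
  have dUt : deriv (fun t' => u x t' - lam) t = deriv (fun t' => u x t') t := by
    simp [deriv_sub_const]
  have dB00 : deriv (fun x' => -(deriv (fun y => u y t) x')) x
      = -(deriv (deriv (fun y => u y t)) x) := by
    simp
  have dB01 : deriv (fun x' => 2 * u x' t + 4 * lam) x = 2 * deriv (fun y => u y t) x := by
    rw [deriv_add_const]
    exact deriv_const_mul _ (hg1 x)
  have dB10 : deriv (fun x' => 2 * (u x' t) ^ 2 - deriv (deriv (fun y => u y t)) x'
        + 2 * u x' t * lam - 4 * lam ^ 2) x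
      = 4 * u x t * deriv (fun y => u y t) x - deriv (deriv (deriv (fun y => u y t))) x
        + 2 * deriv (fun y => u y t) x * lam := by
    have h1 : DifferentiableAt ℝ (fun x' => 2 * (u x' t) ^ 2) x := ((hg1 x).pow 2).const_mul 2
    have h2 : DifferentiableAt ℝ (fun x' => 2 * (u x' t) ^ 2
        - deriv (deriv (fun y => u y t)) x') x := h1.sub (hg3 x)
    have h3 : DifferentiableAt ℝ (fun x' => 2 * u x' t * lam) x := ((hg1 x).const_mul 2).mul_const lam
    rw [deriv_sub_const, deriv_fun_add h2 h3, deriv_fun_sub h1 (hg3 x),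
      deriv_const_mul (d := fun x' => u x' t ^ 2) _ ((hg1 x).pow 2), deriv_fun_pow (hg1 x) _,
      deriv_mul_const ((hg1 x).const_mul 2), deriv_const_mul _ (hg1 x)]
    ring
  have hPDt : matPDt (kdvUL u lam) x t = !![0, 0; deriv (fun t' => u x t') t, 0] := by
    ext i j
    fin_cases i <;> fin_cases j <;>
      simp [matPDt, kdvUL, Matrix.vecHead, Matrix.vecTail, dUt]
  have hPDx : matPDx (kdvVA u lam) x t
      = !![-(deriv (deriv (fun y => u y t)) x), 2 * deriv (fun y => u y t) x;
           4 * u x t * deriv (fun y => u y t) x - deriv (deriv (deriv (fun y => u y t))) x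
             + 2 * deriv (fun y => u y t) x * lam,
           deriv (deriv (fun y => u y t)) x] := by
    ext i j
    fin_cases i <;> fin_cases j <;>
      simp only [matPDx, kdvVA, Matrix.of_apply, Matrix.cons_val', Matrix.cons_val_zero,
        Matrix.cons_val_one, Matrix.head_cons, Matrix.head_fin_const, Matrix.empty_val',
        Matrix.cons_val_fin_one, Matrix.vecHead, Matrix.vecTail, Function.comp, e2,
        Fin.isValue]
    · exact dB00
    · exact dB01
    · exact dB10
    · rfl
  have hkdv' := hkdv x t
  rw [e3] at hkdv'
  rw [hPDt, hPDx, kdvUL, kdvVA, e2]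
  ext i j
  fin_cases i <;> fin_cases j <;>
    simp [Matrix.mul_apply, Fin.sum_univ_two, Matrix.vecHead, Matrix.vecTail] <;>
    ring_nf <;> nlinarith [hkdv', sq_nonneg (u x t)]
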